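/- arXiv:2108.09242 — 2 statements merged into one kernel-verified Lean document; each statement's English description precedes it below -/
import Mathlib

section
/- Let V be a weight module. There exists a non-degenerate sesquilinear form f on V satisfying f(v₁, x·v₂) = f(x†·v₁, v₂) for all x ∈ U and v₁, v₂ ∈ V if and only if conj(V) is isomorphic to V* as U-modules. Furthermore, if V is simple, then f can be chosen to be Hermitian, and such a Hermitian f is unique up to a nonzero real scalar. -/
noncomputable section

open scoped TensorProduct

namespace QSL2

/-- Generators of the unrolled quantum group. -/
inductive Gen : Type
  | E | F | K | Kinv | H

/-- The free algebra on the generators. -/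
abbrev FA : Type := FreeAlgebra ℂ Gen

def X (g : Gen) : FA := FreeAlgebra.ι ℂ g

/-- `q^x = e^{iπx/r}`. -/
def qc (r : ℕ) (x : ℂ) : ℂ := Complex.exp (Real.pi * Complex.I * x / r)

/-- `q = e^{iπ/r}`. -/
def qq (r : ℕ) : ℂ := qc r 1

/-- `{x} = q^x - q^{-x}`. -/
def brace (r : ℕ) (x : ℂ) : ℂ := qc r x - qc r (-x)

/-- `{n}! = {n}{n-1}⋯{1}`. -/
def braceFac (r : ℕ) (n : ℕ) : ℂ := ∏ k ∈ Finset.range n, brace r ((k : ℂ) + 1)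

/-- quantum integer `[x] = {x}/{1}`. -/
def qint (r : ℕ) (x : ℂ) : ℂ := brace r x / brace r 1

/-- `γ_{n,k} = [k][n-k+1]`. -/
def gam (r : ℕ) (n k : ℂ) : ℂ := qint r k * qint r (n - k + 1)

/-- The defining relations of `U̅_q^H sl(2)`. -/
inductive Rel (r : ℕ) : FA → FA → Prop
  | KKinv : Rel r (X .K * X .Kinv) 1
  | KinvK : Rel r (X .Kinv * X .K) 1
  | KE : Rel r (X .K * X .E) ((qq r) ^ 2 • (X .E * X .K))
  | KF : Rel r (X .K * X .F) (((qq r)⁻¹) ^ 2 • (X .F * X .K))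
  | EF : Rel r (X .E * X .F - X .F * X .E)
      ((qq r - (qq r)⁻¹)⁻¹ • (X .K - X .Kinv))
  | HK : Rel r (X .H * X .K) (X .K * X .H)
  | HE : Rel r (X .H * X .E - X .E * X .H) ((2 : ℂ) • X .E)
  | HF : Rel r (X .H * X .F - X .F * X .H) ((-2 : ℂ) • X .F)
  | Er : Rel r (X .E ^ r) 0
  | Fr : Rel r (X .F ^ r) 0

/-- The algebra `U = U̅_q^H sl(2)`. -/
abbrev U (r : ℕ) : Type := RingQuot (Rel r)

def gen (r : ℕ) (g : Gen) : U r := RingQuot.mkAlgHom ℂ (Rel r) (X g)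

def uE (r : ℕ) : U r := gen r .E
def uF (r : ℕ) : U r := gen r .F
def uK (r : ℕ) : U r := gen r .K
def uKinv (r : ℕ) : U r := gen r .Kinv
def uH (r : ℕ) : U r := gen r .H

/-- A finite-dimensional representation of `U`. -/
structure Rep (r : ℕ) where
  carrier : Type
  [acg : AddCommGroup carrier]
  [mod : Module ℂ carrier]
  [fd : FiniteDimensional ℂ carrier]
  ρ : U r →ₐ[ℂ] Module.End ℂ carrier

attribute [instance] Rep.acg Rep.mod Rep.fd

instance {r : ℕ} : CoeSort (Rep r) Type := ⟨Rep.carrier⟩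

/-- A weight module: `H` acts diagonalizably and `K` acts as `q^H`. -/
def IsWeightRep {r : ℕ} (V : Rep r) : Prop :=
  ∃ (n : ℕ) (b : Module.Basis (Fin n) ℂ V.carrier) (w : Fin n → ℂ), ∀ i,
    V.ρ (uH r) (b i) = w i • b i ∧ V.ρ (uK r) (b i) = qc r (w i) • b i

/-- A morphism of `U`-modules. -/
def IsModHom {r : ℕ} (V W : Rep r) (g : V.carrier →ₗ[ℂ] W.carrier) : Prop :=
  ∀ (x : U r) (v : V.carrier), g (V.ρ x v) = W.ρ x (g v)

/-- Sesquilinear: antilinear in the first variable, linear in the second. -/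
structure IsSesq {r : ℕ} (V : Rep r) (f : V.carrier → V.carrier → ℂ) : Prop where
  add_left : ∀ u v w, f (u + v) w = f u w + f v w
  add_right : ∀ u v w, f u (v + w) = f u v + f u w
  smul_left : ∀ (a : ℂ) (v w : V.carrier), f (a • v) w = (starRingEnd ℂ) a * f v w
  smul_right : ∀ (a : ℂ) (v w : V.carrier), f v (a • w) = a * f v w

def IsHermitianF {r : ℕ} (V : Rep r) (f : V.carrier → V.carrier → ℂ) : Prop :=
  ∀ v w, f v w = (starRingEnd ℂ) (f w v)

def NondegF {r : ℕ} (V : Rep r) (f : V.carrier → V.carrier → ℂ) : Prop :=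
  ∀ v, (∀ w, f v w = 0) → v = 0

/-- Compatibility of a form with the involution `†` of `U` (`E† = F`, `F† = E`,
`K† = K⁻¹`, `H† = H`), expressed on the generators: `(x† v, w) = (v, x w)`. -/
def CompatF {r : ℕ} (V : Rep r) (f : V.carrier → V.carrier → ℂ) : Prop :=
  (∀ v w, f (V.ρ (uF r) v) w = f v (V.ρ (uE r) w)) ∧
  (∀ v w, f (V.ρ (uE r) v) w = f v (V.ρ (uF r) w)) ∧
  (∀ v w, f (V.ρ (uKinv r) v) w = f v (V.ρ (uK r) w)) ∧
  (∀ v w, f (V.ρ (uK r) v) w = f v (V.ρ (uKinv r) w)) ∧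
  (∀ v w, f (V.ρ (uH r) v) w = f v (V.ρ (uH r) w))

/-- A Hermitian structure: a non-degenerate compatible Hermitian form. -/
def IsHermStr {r : ℕ} (V : Rep r) (f : V.carrier → V.carrier → ℂ) : Prop :=
  IsSesq V f ∧ IsHermitianF V f ∧ NondegF V f ∧ CompatF V f

/-- `α ∈ (ℝ∖ℤ) ∪ rℤ`. -/
def AdmissibleAlpha (r : ℕ) (α : ℂ) : Prop :=
  (α.im = 0 ∧ ∀ n : ℤ, α ≠ (n : ℂ)) ∨ (∃ m : ℤ, α = (r : ℂ) * (m : ℂ))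

/-- Presentation of the basis of `V_α`. -/
def IsValphaBasis {r : ℕ} (V : Rep r) (α : ℂ) (b : Module.Basis (Fin r) ℂ V.carrier) : Prop :=
  ∀ i : Fin r,
    V.ρ (uH r) (b i) = (α + r - 1 - 2 * (i : ℕ)) • b i ∧
    V.ρ (uK r) (b i) = qc r (α + r - 1 - 2 * (i : ℕ)) • b i ∧
    V.ρ (uF r) (b i) = (if h : (i : ℕ) + 1 < r then b ⟨(i : ℕ) + 1, h⟩ else 0) ∧
    V.ρ (uE r) (b i) =
      (if h : 0 < (i : ℕ) then
        (brace r ((i : ℕ) : ℂ) * brace r (((i : ℕ) : ℂ) - α) / (brace r 1) ^ 2) •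
          b ⟨(i : ℕ) - 1, by have := i.isLt; omega⟩
      else 0)

/-- Presentation of the basis of the simple module `S_n`. -/
def IsSnBasis {r : ℕ} (n : ℕ) (V : Rep r) (b : Module.Basis (Fin (n + 1)) ℂ V.carrier) : Prop :=
  ∀ i : Fin (n + 1),
    V.ρ (uH r) (b i) = ((n : ℂ) - 2 * (i : ℕ)) • b i ∧
    V.ρ (uK r) (b i) = qc r ((n : ℂ) - 2 * (i : ℕ)) • b i ∧
    V.ρ (uF r) (b i) = (if h : (i : ℕ) + 1 < n + 1 then b ⟨(i : ℕ) + 1, h⟩ else 0) ∧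
    V.ρ (uE r) (b i) =
      (if h : 0 < (i : ℕ) then
        (brace r ((i : ℕ) : ℂ) * brace r ((n : ℂ) + 1 - ((i : ℕ) : ℂ)) / (brace r 1) ^ 2) •
          b ⟨(i : ℕ) - 1, by have := i.isLt; omega⟩
      else 0)

/-- Presentation of the one-dimensional module `ℂ^H_{ar}`. -/
def IsCHBasis {r : ℕ} (a : ℤ) (V : Rep r) (b : Module.Basis (Fin 1) ℂ V.carrier) : Prop :=
  V.ρ (uH r) (b 0) = ((a : ℂ) * r) • b 0 ∧
  V.ρ (uK r) (b 0) = qc r ((a : ℂ) * r) • b 0 ∧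
  V.ρ (uE r) (b 0) = 0 ∧ V.ρ (uF r) (b 0) = 0

end QSL2

namespace QSL2

/-- `V` is a simple module. -/
def IsSimpleRep {r : ℕ} (V : Rep r) : Prop :=
  (∃ v : V.carrier, v ≠ 0) ∧
  ∀ p : Submodule ℂ V.carrier, (∀ (x : U r), ∀ v ∈ p, V.ρ x v ∈ p) → p = ⊥ ∨ p = ⊤


section Helpers

variable {r : ℕ}

lemma uK_mul_uKinv (r : ℕ) : uK r * uKinv r = 1 := by
  have h := RingQuot.mkAlgHom_rel ℂ (Rel.KKinv (r := r))
  simpa [uK, uKinv, gen, X, map_mul] using h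

lemma uKinv_mul_uK (r : ℕ) : uKinv r * uK r = 1 := by
  have h := RingQuot.mkAlgHom_rel ℂ (Rel.KinvK (r := r))
  simpa [uK, uKinv, gen, X, map_mul] using h

lemma U_induction {P : U r → Prop}
    (halg : ∀ c : ℂ, P (algebraMap ℂ (U r) c))
    (hgen : ∀ g, P (gen r g))
    (hadd : ∀ x y, P x → P y → P (x + y))
    (hmul : ∀ x y, P x → P y → P (x * y)) : ∀ x, P x := by
  intro x
  obtain ⟨a, rfl⟩ := RingQuot.mkAlgHom_surjective ℂ (Rel r) x
  induction a using FreeAlgebra.induction with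
  | grade0 c => simpa using halg c
  | grade1 g => exact hgen g
  | mul a b ha hb => rw [map_mul]; exact hmul _ _ ha hb
  | add a b ha hb => rw [map_add]; exact hadd _ _ ha hb

section Dag

variable (dag : U r →ₛₗ[starRingEnd ℂ] U r)
  (hdagE : dag (uE r) = uF r) (hdagF : dag (uF r) = uE r)
  (hdagK : dag (uK r) = uKinv r) (hdagKinv : dag (uKinv r) = uK r)
  (hdagH : dag (uH r) = uH r)
  (hdagMul : ∀ x y : U r, dag (x * y) = dag y * dag x)

include hdagK hdagKinv hdagMul in
lemma dag_one' : dag 1 = 1 := by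
  have h := hdagMul (uK r) (uKinv r)
  rw [hdagK, hdagKinv] at h
  rw [uK_mul_uKinv] at h
  exact h

include hdagE hdagF hdagK hdagKinv hdagH hdagMul in
lemma dag_dag : ∀ x : U r, dag (dag x) = x := by
  apply U_induction
  · intro c
    rw [Algebra.algebraMap_eq_smul_one, map_smulₛₗ, dag_one' dag hdagK hdagKinv hdagMul,
      map_smulₛₗ, dag_one' dag hdagK hdagKinv hdagMul]
    simp
  · intro g
    cases g with
    | E => show dag (dag (uE r)) = uE r; rw [hdagE, hdagF]
    | F => show dag (dag (uF r)) = uF r; rw [hdagF, hdagE]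
    | K => show dag (dag (uK r)) = uK r; rw [hdagK, hdagKinv]
    | Kinv => show dag (dag (uKinv r)) = uKinv r; rw [hdagKinv, hdagK]
    | H => show dag (dag (uH r)) = uH r; rw [hdagH, hdagH]
  · intro x y hx hy; rw [map_add, map_add, hx, hy]
  · intro x y hx hy; rw [hdagMul, hdagMul, hx, hy]

end Dag

/-- The antilinear map `v ↦ f v ·` into the dual. -/
def sesqDual (V : Rep r) (f : V.carrier → V.carrier → ℂ) (hs : IsSesq V f) :
    V.carrier → Module.Dual ℂ V.carrier := fun v =>
  { toFun := f v
    map_add' := fun a b => hs.add_right v a b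
    map_smul' := fun a w => hs.smul_right a v w }

@[simp] lemma sesqDual_apply (V : Rep r) (f : V.carrier → V.carrier → ℂ) (hs : IsSesq V f)
    (v w : V.carrier) : sesqDual V f hs v w = f v w := rfl

lemma IsSesq.sub_left {V : Rep r} {f : V.carrier → V.carrier → ℂ} (hs : IsSesq V f)
    (u v w : V.carrier) : f (u - v) w = f u w - f v w := by
  have h1 := hs.add_left u ((-1 : ℂ) • v) w
  have h2 := hs.smul_left (-1 : ℂ) v w
  rw [h2] at h1
  simpa [sub_eq_add_neg] using h1

lemma sesqDual_bijective (V : Rep r) (f : V.carrier → V.carrier → ℂ) (hs : IsSesq V f)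
    (hn : NondegF V f) : Function.Bijective (sesqDual V f hs) := by
  let φ : V.carrier →ₗ[ℝ] Module.Dual ℂ V.carrier :=
    { toFun := sesqDual V f hs
      map_add' := fun u v => LinearMap.ext fun w => hs.add_left u v w
      map_smul' := fun a v => LinearMap.ext fun w => by
        have h1 : (a : ℂ) • v = a • v := rfl
        have h := hs.smul_left (a : ℂ) v w
        rw [h1] at h
        simp only [sesqDual_apply, RingHom.id_apply, LinearMap.smul_apply]
        rw [h, Complex.conj_ofReal]
        rfl }
  have hinj : Function.Injective φ := by
    intro u v huv
    have h0 : ∀ w, f (u - v) w = 0 := fun w => by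
      have := LinearMap.congr_fun huv w
      simp only [φ, LinearMap.coe_mk, AddHom.coe_mk, sesqDual_apply] at this
      rw [hs.sub_left, this, sub_self]
    have := hn _ h0
    exact sub_eq_zero.mp this
  have hrank : Module.finrank ℝ V.carrier = Module.finrank ℝ (Module.Dual ℂ V.carrier) := by
    rw [← Module.finrank_mul_finrank ℝ ℂ V.carrier,
      ← Module.finrank_mul_finrank ℝ ℂ (Module.Dual ℂ V.carrier),
      Subspace.dual_finrank_eq]
  have hsurj : Function.Surjective φ :=
    (LinearMap.injective_iff_surjective_of_finrank_eq_finrank hrank).mp hinj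
  exact ⟨hinj, hsurj⟩

lemma nondeg_right (V : Rep r) (f : V.carrier → V.carrier → ℂ) (hs : IsSesq V f)
    (hn : NondegF V f) : ∀ v, (∀ w, f w v = 0) → v = 0 := by
  intro v hv
  have hsurj := (sesqDual_bijective V f hs hn).2
  refine (Module.forall_dual_apply_eq_zero_iff ℂ v).mp fun ξ => ?_
  obtain ⟨u, rfl⟩ := hsurj ξ
  exact hv u

end Helpers

section Prop1

variable {r : ℕ}

lemma proportional (dag : U r →ₛₗ[starRingEnd ℂ] U r)
    (hdd : ∀ x : U r, dag (dag x) = x)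
    (V : Rep r) (hsimp : IsSimpleRep V)
    (f f' : V.carrier → V.carrier → ℂ)
    (hs : IsSesq V f) (hn : NondegF V f)
    (hc : ∀ (x : U r) (v₁ v₂ : V.carrier), f v₁ (V.ρ x v₂) = f (V.ρ (dag x) v₁) v₂)
    (hs' : IsSesq V f') (hn' : NondegF V f')
    (hc' : ∀ (x : U r) (v₁ v₂ : V.carrier), f' v₁ (V.ρ x v₂) = f' (V.ρ (dag x) v₁) v₂) :
    ∃ lam : ℂ, lam ≠ 0 ∧ ∀ v w, f' v w = lam * f v w := by
  obtain ⟨hinj, hsurj⟩ := sesqDual_bijective V f hs hn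
  -- the intertwiner T
  choose T hT using fun v => hsurj (sesqDual V f' hs' v)
  have key : ∀ v w, f (T v) w = f' v w := fun v w => by
    have := congrArg (fun ξ : Module.Dual ℂ V.carrier => ξ w) (hT v)
    simpa using this
  have Tinj : ∀ u v : V.carrier, (∀ w, f u w = f v w) → u = v := by
    intro u v huv
    have : ∀ w, f (u - v) w = 0 := fun w => by rw [hs.sub_left, huv, sub_self]
    exact sub_eq_zero.mp (hn _ this)
  have Tadd : ∀ u v, T (u + v) = T u + T v := by
    intro u v
    refine Tinj _ _ fun w => ?_
    rw [hs.add_left, key, key, key, hs'.add_left]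
  have Tsmul : ∀ (c : ℂ) v, T (c • v) = c • T v := by
    intro c v
    refine Tinj _ _ fun w => ?_
    rw [hs.smul_left, key, key, hs'.smul_left]
  have Tcomm : ∀ (y : U r) (v : V.carrier), T (V.ρ y v) = V.ρ y (T v) := by
    intro y v
    refine Tinj _ _ fun w => ?_
    rw [key]
    have h1 : f' (V.ρ y v) w = f' v (V.ρ (dag y) w) := by
      have := hc' (dag y) v w
      rw [hdd] at this; exact this.symm
    have h2 : f (V.ρ y (T v)) w = f (T v) (V.ρ (dag y) w) := by
      have := hc (dag y) (T v) w
      rw [hdd] at this; exact this.symm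
    rw [h1, h2, key]
  -- Schur
  obtain ⟨v₀, hv₀⟩ := hsimp.1
  haveI : Nontrivial V.carrier := ⟨⟨v₀, 0, hv₀⟩⟩
  let Tc : Module.End ℂ V.carrier :=
    { toFun := T
      map_add' := Tadd
      map_smul' := Tsmul }
  obtain ⟨c, hc0⟩ := Module.End.exists_eigenvalue Tc
  obtain ⟨v₁, hv₁⟩ := hc0.exists_hasEigenvector
  have heig : ∀ v : V.carrier, T v = c • v := by
    set p : Submodule ℂ V.carrier := LinearMap.ker (Tc - c • (1 : Module.End ℂ V.carrier)) with hp
    have hmem : ∀ v, v ∈ p ↔ T v = c • v := by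
      intro v
      simp [p, LinearMap.mem_ker, sub_eq_zero, Tc]
    have hinv : ∀ (x : U r), ∀ v ∈ p, V.ρ x v ∈ p := by
      intro x v hv
      rw [hmem] at hv ⊢
      rw [Tcomm, hv, map_smul]
    rcases hsimp.2 p hinv with hbot | htop
    · exfalso
      have : v₁ ∈ p := (hmem v₁).mpr hv₁.apply_eq_smul
      rw [hbot] at this
      exact hv₁.2 (by simpa using this)
    · intro v
      exact (hmem v).mp (htop ▸ Submodule.mem_top)
  have habs : ∀ v w, f' v w = (starRingEnd ℂ) c * f v w := by
    intro v w
    rw [← key, heig, hs.smul_left]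
  refine ⟨(starRingEnd ℂ) c, ?_, habs⟩
  intro hcz
  have hc' : c = 0 := by
    have := congrArg (starRingEnd ℂ) hcz
    simpa using this
  apply hv₀
  apply hn' v₀
  intro w
  rw [habs, hc']
  simp
end Prop1

/-- A weight module `V` carries a non-degenerate sesquilinear form
compatible with `†` iff `conj(V) ≅ V*`; if `V` is simple, the form can be chosen
Hermitian, uniquely up to a nonzero real scalar. -/
theorem compatible_sesquilinear_form_iff_conj_iso_dual
    (r : ℕ) (hr : 2 ≤ r)
    (Sa : U r →ₐ[ℂ] (U r)ᵐᵒᵖ)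
    (hSE : Sa (uE r) = MulOpposite.op (-(uE r * uKinv r)))
    (hSF : Sa (uF r) = MulOpposite.op (-(uK r * uF r)))
    (hSK : Sa (uK r) = MulOpposite.op (uKinv r))
    (hSKinv : Sa (uKinv r) = MulOpposite.op (uK r))
    (hSH : Sa (uH r) = MulOpposite.op (-(uH r)))
    (dag : U r →ₛₗ[starRingEnd ℂ] U r)
    (hdagE : dag (uE r) = uF r) (hdagF : dag (uF r) = uE r)
    (hdagK : dag (uK r) = uKinv r) (hdagKinv : dag (uKinv r) = uK r)
    (hdagH : dag (uH r) = uH r)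
    (hdagMul : ∀ x y : U r, dag (x * y) = dag y * dag x)
    (V : Rep r) (hV : IsWeightRep V) :
    -- existence of a compatible non-degenerate sesquilinear form iff `conj(V) ≅ V*`
    ((∃ f : V.carrier → V.carrier → ℂ, IsSesq V f ∧ NondegF V f ∧
        (∀ (x : U r) (v₁ v₂ : V.carrier), f v₁ (V.ρ x v₂) = f (V.ρ (dag x) v₁) v₂))
      ↔
      (∃ φ : V.carrier → Module.Dual ℂ V.carrier,
        Function.Bijective φ ∧
        (∀ v w : V.carrier, φ (v + w) = φ v + φ w) ∧
        (∀ (a : ℂ) (v : V.carrier), φ (a • v) = (starRingEnd ℂ) a • φ v) ∧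
        (∀ (x : U r) (v : V.carrier),
          φ (V.ρ (dag ((Sa x).unop)) v) = (V.ρ ((Sa x).unop)).dualMap (φ v)))) ∧
    -- for a simple module the form can be chosen Hermitian …
    (IsSimpleRep V →
      (∃ f : V.carrier → V.carrier → ℂ, IsSesq V f ∧ NondegF V f ∧
        (∀ (x : U r) (v₁ v₂ : V.carrier), f v₁ (V.ρ x v₂) = f (V.ρ (dag x) v₁) v₂)) →
      ∃ f : V.carrier → V.carrier → ℂ, IsSesq V f ∧ NondegF V f ∧ IsHermitianF V f ∧
        (∀ (x : U r) (v₁ v₂ : V.carrier), f v₁ (V.ρ x v₂) = f (V.ρ (dag x) v₁) v₂)) ∧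
    -- … and is unique up to a nonzero real scalar
    (IsSimpleRep V →
      ∀ f f' : V.carrier → V.carrier → ℂ,
        (IsSesq V f ∧ NondegF V f ∧ IsHermitianF V f ∧
          (∀ (x : U r) (v₁ v₂ : V.carrier), f v₁ (V.ρ x v₂) = f (V.ρ (dag x) v₁) v₂)) →
        (IsSesq V f' ∧ NondegF V f' ∧ IsHermitianF V f' ∧
          (∀ (x : U r) (v₁ v₂ : V.carrier), f' v₁ (V.ρ x v₂) = f' (V.ρ (dag x) v₁) v₂)) →
        ∃ c : ℝ, c ≠ 0 ∧ ∀ v w : V.carrier, f' v w = (c : ℂ) * f v w) := by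


  have hdd : ∀ x : U r, dag (dag x) = x :=
    dag_dag dag hdagE hdagF hdagK hdagKinv hdagH hdagMul
  refine ⟨?_, ?_, ?_⟩
  · -- iff
    constructor
    · rintro ⟨f, hs, hn, hc⟩
      refine ⟨sesqDual V f hs, sesqDual_bijective V f hs hn, ?_, ?_, ?_⟩
      · intro v w
        exact LinearMap.ext fun u => hs.add_left v w u
      · intro a v
        refine LinearMap.ext fun u => ?_
        simp only [sesqDual_apply, LinearMap.smul_apply, smul_eq_mul]
        exact hs.smul_left a v u
      · intro x v
        refine LinearMap.ext fun w => ?_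
        simp only [sesqDual_apply, LinearMap.dualMap_apply]
        exact (hc ((Sa x).unop) v w).symm
    · rintro ⟨φ, hbij, hadd, hsmul, hequiv⟩
      have hphi0 : φ 0 = 0 := by
        have h := hadd 0 0
        rw [add_zero] at h
        exact left_eq_add.mp h
      have hP : ∀ x : U r, ∀ v w : V.carrier, φ v (V.ρ x w) = φ (V.ρ (dag x) v) w := by
        apply U_induction (P := fun x => ∀ v w : V.carrier, φ v (V.ρ x w) = φ (V.ρ (dag x) v) w)
        · intro c v w
          have hd1 : dag (algebraMap ℂ (U r) c) = (starRingEnd ℂ) c • 1 := by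
            rw [Algebra.algebraMap_eq_smul_one, map_smulₛₗ,
              dag_one' dag hdagK hdagKinv hdagMul]
          have hρ1 : ∀ u : V.carrier, V.ρ (algebraMap ℂ (U r) c) u = c • u := by
            intro u
            rw [AlgHom.commutes]
            simp [Module.algebraMap_end_apply]
          have l1 : V.ρ ((starRingEnd ℂ) c • 1) v = (starRingEnd ℂ) c • v := by
            rw [map_smul, map_one]
            simp
          rw [hd1, hρ1, l1, hsmul, map_smul]
          simp [smul_eq_mul]
        · intro g
          cases g with
          | E =>
            have hSa : Sa (-(uKinv r * uE r)) = MulOpposite.op (uE r) := by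
              rw [map_neg, map_mul, hSKinv, hSE, ← MulOpposite.op_mul]
              have h1 : (-(uE r * uKinv r)) * uK r = -(uE r) := by
                have hn := neg_mul (uE r * uKinv r) (uK r)
                rw [hn, mul_assoc, uKinv_mul_uK, mul_one]
              rw [h1, MulOpposite.op_neg, neg_neg]
            intro v w
            show φ v (V.ρ (uE r) w) = φ (V.ρ (dag (uE r)) v) w
            have h := hequiv (-(uKinv r * uE r)) v
            rw [hSa, MulOpposite.unop_op] at h
            have h2 := LinearMap.congr_fun h w
            rw [LinearMap.dualMap_apply] at h2
            exact h2.symm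
          | F =>
            have hSa : Sa (-(uF r * uK r)) = MulOpposite.op (uF r) := by
              rw [map_neg, map_mul, hSF, hSK, ← MulOpposite.op_mul]
              have h1 : uKinv r * (-(uK r * uF r)) = -(uF r) := by
                have hn := mul_neg (uKinv r) (uK r * uF r)
                rw [hn, ← mul_assoc, uKinv_mul_uK, one_mul]
              rw [h1, MulOpposite.op_neg, neg_neg]
            intro v w
            show φ v (V.ρ (uF r) w) = φ (V.ρ (dag (uF r)) v) w
            have h := hequiv (-(uF r * uK r)) v
            rw [hSa, MulOpposite.unop_op] at h
            have h2 := LinearMap.congr_fun h w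
            rw [LinearMap.dualMap_apply] at h2
            exact h2.symm
          | K =>
            intro v w
            show φ v (V.ρ (uK r) w) = φ (V.ρ (dag (uK r)) v) w
            have h := hequiv (uKinv r) v
            rw [hSKinv, MulOpposite.unop_op] at h
            have h2 := LinearMap.congr_fun h w
            rw [LinearMap.dualMap_apply] at h2
            exact h2.symm
          | Kinv =>
            intro v w
            show φ v (V.ρ (uKinv r) w) = φ (V.ρ (dag (uKinv r)) v) w
            have h := hequiv (uK r) v
            rw [hSK, MulOpposite.unop_op] at h
            have h2 := LinearMap.congr_fun h w
            rw [LinearMap.dualMap_apply] at h2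
            exact h2.symm
          | H =>
            have hSa : Sa (-(uH r)) = MulOpposite.op (uH r) := by
              rw [map_neg, hSH, MulOpposite.op_neg, neg_neg]
            intro v w
            show φ v (V.ρ (uH r) w) = φ (V.ρ (dag (uH r)) v) w
            have h := hequiv (-(uH r)) v
            rw [hSa, MulOpposite.unop_op] at h
            have h2 := LinearMap.congr_fun h w
            rw [LinearMap.dualMap_apply] at h2
            exact h2.symm
        · intro x y hx hy v w
          simp only [map_add, LinearMap.add_apply]
          rw [hx, hy, hadd, LinearMap.add_apply]
        · intro x y hx hy v w
          rw [map_mul, Module.End.mul_apply, hx, hy, hdagMul, map_mul, Module.End.mul_apply]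
      refine ⟨fun v w => φ v w, ⟨?_, ?_, ?_, ?_⟩, ?_, fun x v₁ v₂ => hP x v₁ v₂⟩
      · intro u v w
        rw [hadd]
        rfl
      · intro u v w
        exact (φ u).map_add v w
      · intro a v w
        rw [hsmul]
        rfl
      · intro a v w
        exact (φ v).map_smul a w
      · intro v hv
        exact hbij.1 ((LinearMap.ext hv).trans hphi0.symm)
  · -- Hermitian choice
    rintro hsimp ⟨f, hs, hn, hc⟩
    set g : V.carrier → V.carrier → ℂ := fun v w => (starRingEnd ℂ) (f w v) with hg
    have hgs : IsSesq V g := by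
      refine ⟨?_, ?_, ?_, ?_⟩
      · intro u v w; simp only [g]; rw [hs.add_right, map_add]
      · intro u v w; simp only [g]; rw [hs.add_left, map_add]
      · intro a v w; simp only [g]; rw [hs.smul_right, map_mul]
      · intro a v w; simp only [g]; rw [hs.smul_left, map_mul, Complex.conj_conj]
    have hgn : NondegF V g := by
      intro v hv
      apply nondeg_right V f hs hn v
      intro w
      have h2 := hv w
      exact star_eq_zero.mp h2
    have hgc : ∀ (x : U r) (v₁ v₂ : V.carrier), g v₁ (V.ρ x v₂) = g (V.ρ (dag x) v₁) v₂ := by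
      intro x v w
      simp only [g]
      congr 1
      have h := hc (dag x) w v
      rw [hdd] at h
      exact h.symm
    obtain ⟨lam, hlam0, hlam⟩ := proportional dag hdd V hsimp f g hs hn hc hgs hgn hgc
    obtain ⟨v₀, hv₀⟩ := hsimp.1
    obtain ⟨w₀, hw₀⟩ : ∃ w, f v₀ w ≠ 0 := by
      by_contra h
      push_neg at h
      exact hv₀ (hn v₀ h)
    have habs : (starRingEnd ℂ) lam * lam = 1 := by
      have e1 : (starRingEnd ℂ) (f w₀ v₀) = lam * f v₀ w₀ := hlam v₀ w₀
      have e2 : (starRingEnd ℂ) (f v₀ w₀) = lam * f w₀ v₀ := hlam w₀ v₀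
      have e3 := congrArg (starRingEnd ℂ) e2
      rw [map_mul, Complex.conj_conj, e1] at e3
      have e4 : ((starRingEnd ℂ) lam * lam) * f v₀ w₀ = 1 * f v₀ w₀ := by
        rw [one_mul, mul_assoc, ← e3]
      exact mul_right_cancel₀ hw₀ e4
    have habs1 : ‖lam‖ = 1 := by
      have h1 : ((Complex.normSq lam : ℝ) : ℂ) = 1 := by
        rw [← Complex.mul_conj lam, mul_comm]
        exact habs
      have h2 : Complex.normSq lam = 1 := by exact_mod_cast h1
      rw [Complex.norm_def, h2, Real.sqrt_one]
    set mu : ℂ := Complex.exp (Complex.log lam / 2) with hmu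
    have hmune : mu ≠ 0 := Complex.exp_ne_zero _
    have hmusq : mu * mu = lam := by
      rw [hmu, ← Complex.exp_add, add_halves, Complex.exp_log hlam0]
    have hre : (Complex.log lam).re = 0 := by
      rw [Complex.log_re, habs1, Real.log_one]
    have hconjlog : (starRingEnd ℂ) (Complex.log lam) = -(Complex.log lam) := by
      apply Complex.ext <;> simp [hre]
    have hconjmu : (starRingEnd ℂ) mu * mu = 1 := by
      have hd : (starRingEnd ℂ) (Complex.log lam / 2) = -(Complex.log lam) / 2 := by
        rw [map_div₀, hconjlog, map_ofNat]
      rw [hmu, ← Complex.exp_conj, hd, ← Complex.exp_add, neg_div, neg_add_cancel,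
        Complex.exp_zero]
    refine ⟨fun v w => mu * f v w, ⟨?_, ?_, ?_, ?_⟩, ?_, ?_, ?_⟩
    · intro u v w
      rw [hs.add_left, mul_add]
    · intro u v w
      rw [hs.add_right, mul_add]
    · intro a v w
      rw [hs.smul_left]
      ring
    · intro a v w
      rw [hs.smul_right]
      ring
    · intro v hv
      apply hn v
      intro w
      have := hv w
      rcases mul_eq_zero.mp this with h | h
      · exact absurd h hmune
      · exact h
    · intro v w
      have h1 : (starRingEnd ℂ) (f w v) = lam * f v w := hlam v w
      rw [map_mul, h1, ← hmusq]
      have hring : (starRingEnd ℂ) mu * (mu * mu * f v w) =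
          ((starRingEnd ℂ) mu * mu) * (mu * f v w) := by ring
      rw [hring, hconjmu, one_mul]
    · intro x v₁ v₂
      show mu * f v₁ (V.ρ x v₂) = mu * f (V.ρ (dag x) v₁) v₂
      rw [hc]
  · -- uniqueness
    rintro hsimp f f' ⟨hs, hn, hh, hc⟩ ⟨hs', hn', hh', hc'⟩
    obtain ⟨lam, hlam0, hlam⟩ := proportional dag hdd V hsimp f f' hs hn hc hs' hn' hc'
    obtain ⟨v₀, hv₀⟩ := hsimp.1
    obtain ⟨w₀, hw₀⟩ : ∃ w, f v₀ w ≠ 0 := by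
      by_contra h
      push_neg at h
      exact hv₀ (hn v₀ h)
    have hreal : (starRingEnd ℂ) lam = lam := by
      have e1 : f' v₀ w₀ = lam * f v₀ w₀ := hlam v₀ w₀
      have e2 : f' v₀ w₀ = (starRingEnd ℂ) lam * f v₀ w₀ := by
        rw [hh' v₀ w₀, hlam w₀ v₀, map_mul, ← hh v₀ w₀]
      exact mul_right_cancel₀ hw₀ (e2.symm.trans e1)
    refine ⟨lam.re, ?_, ?_⟩
    · intro h0
      apply hlam0
      have h1 : (lam.re : ℂ) = lam := Complex.conj_eq_iff_re.mp hreal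
      rw [← h1, h0]
      simp
    · intro v w
      rw [hlam, Complex.conj_eq_iff_re.mp hreal]

end QSL2
end
end

section
/- Every simple module in the set A (i.e. each V_α with α ∈ (ℝ∖ℤ) ∪ rℤ, each S_n with n ∈ {0,…,r−2}, and each ℂ^H_{ar} with a ∈ ℤ) admits a non-degenerate compatible Hermitian form, and this form is uniquely determined by the normalization (v₀, v₀) = 1 for a highest weight vector v₀. -/
noncomputable section

open scoped TensorProduct

namespace QSL2


/-! ### Auxiliary lemmas -/

lemma qc_mul (r : ℕ) (x y : ℂ) : qc r x * qc r y = qc r (x + y) := by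
  rw [qc, qc, qc, ← Complex.exp_add]
  congr 1
  ring

lemma qc_ne_zero (r : ℕ) (x : ℂ) : qc r x ≠ 0 := Complex.exp_ne_zero _

lemma qc_zero (r : ℕ) : qc r 0 = 1 := by simp [qc]

lemma qc_neg_mul (r : ℕ) (x : ℂ) : qc r (-x) * qc r x = 1 := by
  rw [qc_mul]; simp [qc_zero]

lemma qc_neg (r : ℕ) (x : ℂ) : qc r (-x) = (qc r x)⁻¹ :=
  eq_inv_of_mul_eq_one_left (qc_neg_mul r x)

lemma conj_qc (r : ℕ) {x : ℂ} (hx : (starRingEnd ℂ) x = x) :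
    (starRingEnd ℂ) (qc r x) = qc r (-x) := by
  rw [qc, qc, ← Complex.exp_conj]
  congr 1
  rw [map_div₀, map_mul, map_mul, Complex.conj_I, hx]
  simp only [Complex.conj_ofReal, map_natCast]
  ring

lemma conj_brace (r : ℕ) {x : ℂ} (hx : (starRingEnd ℂ) x = x) :
    (starRingEnd ℂ) (brace r x) = - brace r x := by
  have h2 : (starRingEnd ℂ) (-x) = -x := by rw [map_neg, hx]
  rw [brace, map_sub, conj_qc r hx, conj_qc r h2, neg_neg]
  ring

lemma brace_eq_zero_iff (r : ℕ) (hr : r ≠ 0) (x : ℂ) :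
    brace r x = 0 ↔ ∃ n : ℤ, x = (n : ℂ) * r := by
  have hrc : (r : ℂ) ≠ 0 := Nat.cast_ne_zero.mpr hr
  have hπ : (Real.pi : ℂ) ≠ 0 := Complex.ofReal_ne_zero.mpr Real.pi_ne_zero
  have key : brace r x = qc r (-x) * (qc r (2 * x) - 1) := by
    rw [mul_sub, qc_mul, mul_one, brace]
    congr 2
    ring
  rw [key, mul_eq_zero]
  simp only [qc_ne_zero, false_or, sub_eq_zero]
  rw [qc, Complex.exp_eq_one_iff]
  constructor
  · rintro ⟨n, hn⟩
    refine ⟨n, ?_⟩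
    have h2 : (2 * (Real.pi : ℂ) * Complex.I) * x
        = (2 * (Real.pi : ℂ) * Complex.I) * ((n : ℂ) * r) := by
      field_simp at hn
      linear_combination (2 * (Real.pi : ℂ) * Complex.I) * hn
    exact mul_left_cancel₀
      (mul_ne_zero (mul_ne_zero two_ne_zero hπ) Complex.I_ne_zero) h2
  · rintro ⟨n, hn⟩
    refine ⟨n, ?_⟩
    rw [hn]
    field_simp

lemma brace_nat_ne_zero (r : ℕ) (hr : 2 ≤ r) {k : ℕ} (h0 : 0 < k) (h1 : k < r) :
    brace r (k : ℂ) ≠ 0 := by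
  intro hcon
  rw [brace_eq_zero_iff r (by omega)] at hcon
  obtain ⟨n, hn⟩ := hcon
  have h2 : (k : ℤ) = n * r := by exact_mod_cast hn
  have hd : (r : ℤ) ∣ (k : ℤ) := ⟨n, by rw [h2]; ring⟩
  have := Int.le_of_dvd (by exact_mod_cast h0) hd
  omega

lemma brace_one_ne_zero (r : ℕ) (hr : 2 ≤ r) : brace r 1 ≠ 0 := by
  have := brace_nat_ne_zero r hr (k := 1) (by omega) (by omega)
  simpa using this

/-! ### Sesquilinear generalities -/

lemma sesq_zero_left {r : ℕ} {V : Rep r} {g : V.carrier → V.carrier → ℂ}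
    (hg : IsSesq V g) (u : V.carrier) : g 0 u = 0 := by
  have := hg.smul_left 0 0 u
  simpa using this

lemma sesq_zero_right {r : ℕ} {V : Rep r} {g : V.carrier → V.carrier → ℂ}
    (hg : IsSesq V g) (u : V.carrier) : g u 0 = 0 := by
  have := hg.smul_right 0 u 0
  simpa using this

lemma sesq_sum_left {r : ℕ} {V : Rep r} {g : V.carrier → V.carrier → ℂ}
    (hg : IsSesq V g) {ι : Type} (s : Finset ι)
    (c : ι → ℂ) (x : ι → V.carrier) (u : V.carrier) :
    g (∑ i ∈ s, c i • x i) u = ∑ i ∈ s, (starRingEnd ℂ) (c i) * g (x i) u := by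
  classical
  induction s using Finset.induction_on with
  | empty => simpa using sesq_zero_left hg u
  | insert _ _ ha ih =>
      rw [Finset.sum_insert ha, Finset.sum_insert ha, hg.add_left, hg.smul_left, ih]

lemma sesq_sum_right {r : ℕ} {V : Rep r} {g : V.carrier → V.carrier → ℂ}
    (hg : IsSesq V g) {ι : Type} (s : Finset ι)
    (c : ι → ℂ) (x : ι → V.carrier) (u : V.carrier) :
    g u (∑ i ∈ s, c i • x i) = ∑ i ∈ s, c i * g u (x i) := by
  classical
  induction s using Finset.induction_on with
  | empty => simpa using sesq_zero_right hg u
  | insert _ _ ha ih =>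
      rw [Finset.sum_insert ha, Finset.sum_insert ha, hg.add_right, hg.smul_right, ih]

lemma sesq_expand {r N : ℕ} {V : Rep r} {g : V.carrier → V.carrier → ℂ}
    (hg : IsSesq V g) (b : Module.Basis (Fin N) ℂ V.carrier) (v u : V.carrier) :
    g v u = ∑ i : Fin N, ∑ j : Fin N,
      (starRingEnd ℂ) (b.repr v i) * (b.repr u j * g (b i) (b j)) := by
  conv_lhs => rw [← b.sum_repr v]
  rw [sesq_sum_left hg]
  refine Finset.sum_congr rfl fun i _ => ?_
  conv_lhs => rw [← b.sum_repr u]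
  rw [sesq_sum_right hg, Finset.mul_sum]

lemma sesq_ext {r N : ℕ} {V : Rep r} (b : Module.Basis (Fin N) ℂ V.carrier)
    {g h : V.carrier → V.carrier → ℂ} (hg : IsSesq V g) (hh : IsSesq V h)
    (hb : ∀ i j, g (b i) (b j) = h (b i) (b j)) (v u : V.carrier) : g v u = h v u := by
  rw [sesq_expand hg b, sesq_expand hh b]
  exact Finset.sum_congr rfl fun i _ => Finset.sum_congr rfl fun j _ => by rw [hb]

lemma sesq_comp_left {r : ℕ} {V : Rep r} {g : V.carrier → V.carrier → ℂ}
    (hg : IsSesq V g) (T : Module.End ℂ V.carrier) :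
    IsSesq V (fun v u => g (T v) u) := by
  refine ⟨fun a b c => ?_, fun a b c => hg.add_right _ _ _,
    fun a v u => ?_, fun a v u => hg.smul_right _ _ _⟩
  · rw [map_add, hg.add_left]
  · rw [map_smul, hg.smul_left]

lemma sesq_comp_right {r : ℕ} {V : Rep r} {g : V.carrier → V.carrier → ℂ}
    (hg : IsSesq V g) (T : Module.End ℂ V.carrier) :
    IsSesq V (fun v u => g v (T u)) := by
  refine ⟨fun a b c => hg.add_left _ _ _, fun a b c => ?_,
    fun a v u => hg.smul_left _ _ _, fun a v u => ?_⟩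
  · rw [map_add, hg.add_right]
  · rw [map_smul, hg.smul_right]

/-! ### The products of the `λ`'s -/

def lamext {N : ℕ} (lam : Fin N → ℂ) : ℕ → ℂ :=
  fun k => if h : k < N then lam ⟨k, h⟩ else 1

def dpr {N : ℕ} (lam : Fin N → ℂ) : ℕ → ℂ
  | 0 => 1
  | k + 1 => lamext lam (k + 1) * dpr lam k

lemma dpr_succ {N : ℕ} (lam : Fin N → ℂ) {k : ℕ} (h : k + 1 < N) :
    dpr lam (k + 1) = lam ⟨k + 1, h⟩ * dpr lam k := by
  simp [dpr, lamext, h]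

lemma dpr_conj {N : ℕ} (lam : Fin N → ℂ)
    (hlc : ∀ i, (starRingEnd ℂ) (lam i) = lam i) (k : ℕ) :
    (starRingEnd ℂ) (dpr lam k) = dpr lam k := by
  induction k with
  | zero => simp [dpr]
  | succ k ih =>
      rw [dpr, map_mul, ih, lamext]
      split
      · rw [hlc]
      · rw [map_one]

lemma dpr_ne_zero {N : ℕ} (lam : Fin N → ℂ)
    (hlnz : ∀ i : Fin N, 0 < (i : ℕ) → lam i ≠ 0) :
    ∀ k, k < N → dpr lam k ≠ 0 := by
  intro k
  induction k with
  | zero => intro _; simp [dpr]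
  | succ k ih =>
      intro hk
      rw [dpr_succ lam hk]
      exact mul_ne_zero (hlnz ⟨k + 1, hk⟩ (Nat.succ_pos k)) (ih (by omega))

/-! ### The main ladder lemma -/

lemma ladder (r N : ℕ) (hN : 0 < N) (V : Rep r) (b : Module.Basis (Fin N) ℂ V.carrier)
    (w lam : Fin N → ℂ)
    (hwc : ∀ i, (starRingEnd ℂ) (w i) = w i)
    (hwinj : Function.Injective w)
    (hlc : ∀ i, (starRingEnd ℂ) (lam i) = lam i)
    (hlnz : ∀ i : Fin N, 0 < (i : ℕ) → lam i ≠ 0)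
    (hH : ∀ i, V.ρ (uH r) (b i) = w i • b i)
    (hK : ∀ i, V.ρ (uK r) (b i) = qc r (w i) • b i)
    (hF : ∀ i : Fin N, V.ρ (uF r) (b i) =
      if h : (i : ℕ) + 1 < N then b ⟨(i : ℕ) + 1, h⟩ else 0)
    (hE : ∀ i : Fin N, V.ρ (uE r) (b i) =
      if h : 0 < (i : ℕ) then lam i • b ⟨(i : ℕ) - 1, by have := i.isLt; omega⟩ else 0) :
    ∃! f : V.carrier → V.carrier → ℂ,
      IsHermStr V f ∧ f (b ⟨0, hN⟩) (b ⟨0, hN⟩) = 1 := by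
  classical
  set D : Fin N → ℂ := fun i => dpr lam i with hD
  set f : V.carrier → V.carrier → ℂ :=
    fun v u => ∑ i, D i * ((starRingEnd ℂ) (b.repr v i) * b.repr u i) with hf
  have hDc : ∀ i, (starRingEnd ℂ) (D i) = D i := fun i => dpr_conj lam hlc i
  have hDnz : ∀ i : Fin N, D i ≠ 0 := fun i => dpr_ne_zero lam hlnz i i.isLt
  -- sesquilinearity
  have hsesq : IsSesq V f := by
    refine ⟨fun u v x => ?_, fun u v x => ?_, fun a v x => ?_, fun a v x => ?_⟩
    · simp only [hf, map_add, Finsupp.add_apply, mul_add, add_mul,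
        Finset.sum_add_distrib]
    · simp only [hf, map_add, Finsupp.add_apply, mul_add, add_mul,
        Finset.sum_add_distrib]
    · simp only [hf, map_smul, Finsupp.smul_apply, smul_eq_mul, map_mul]
      rw [Finset.mul_sum]
      exact Finset.sum_congr rfl fun k _ => by ring
    · simp only [hf, map_smul, Finsupp.smul_apply, smul_eq_mul]
      rw [Finset.mul_sum]
      exact Finset.sum_congr rfl fun k _ => by ring
  -- values on basis vectors
  have fb : ∀ i j, f (b i) (b j) = if i = j then D i else 0 := by
    intro i j
    rw [hf]
    simp only [Module.Basis.repr_self, Finsupp.single_apply]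
    rw [Finset.sum_eq_single j]
    · by_cases hij : i = j
      · subst hij; simp
      · simp [hij]
    · intro k _ hk
      simp [Ne.symm hk]
    · simp
  -- action of Kinv
  have hrel : uKinv r * uK r = (1 : U r) := by
    have h := RingQuot.mkAlgHom_rel ℂ (Rel.KinvK (r := r))
    rw [map_mul, map_one] at h
    exact h
  have hKinv : ∀ i, V.ρ (uKinv r) (b i) = (qc r (w i))⁻¹ • b i := by
    intro i
    have h1 : V.ρ (uKinv r) (V.ρ (uK r) (b i)) = b i := by
      rw [← Module.End.mul_apply, ← map_mul, hrel, map_one, Module.End.one_apply]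
    rw [hK i, map_smul] at h1
    have h2 := congrArg (fun x => (qc r (w i))⁻¹ • x) h1
    simpa [smul_smul, inv_mul_cancel₀ (qc_ne_zero r (w i))] using h2
  -- Hermitian
  have hherm : IsHermitianF V f := by
    intro v u
    rw [hf]
    simp only [map_sum, map_mul, hDc, Complex.conj_conj]
    exact Finset.sum_congr rfl fun k _ => by ring
  -- Non-degeneracy
  have hnd : NondegF V f := by
    intro v hv
    have hz : ∀ j, b.repr v j = 0 := by
      intro j
      have h := hv (b j)
      rw [hf] at h
      simp only [Module.Basis.repr_self, Finsupp.single_apply] at h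
      rw [Finset.sum_eq_single j] at h
      · simp only [if_pos rfl, if_true, mul_one] at h
        rcases mul_eq_zero.mp h with h' | h'
        · exact absurd h' (hDnz j)
        · exact star_eq_zero.mp h'
      · intro k _ hk
        simp [Ne.symm hk]
      · simp
    have : b.repr v = 0 := by
      ext j; exact hz j
    exact (b.repr.map_eq_zero_iff).mp this
  -- compat: diagonal operators
  have diagc : ∀ (x y : U r) (c e : Fin N → ℂ),
      (∀ i, V.ρ x (b i) = c i • b i) → (∀ i, V.ρ y (b i) = e i • b i) →
      (∀ i, (starRingEnd ℂ) (c i) = e i) →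
      ∀ v u, f (V.ρ x v) u = f v (V.ρ y u) := by
    intro x y c e hx hy hce v u
    refine sesq_ext b (sesq_comp_left hsesq (V.ρ x)) (sesq_comp_right hsesq (V.ρ y))
      (fun i j => ?_) v u
    rw [hx, hy, hsesq.smul_left, hsesq.smul_right, fb, hce]
    by_cases hij : i = j
    · subst hij; rfl
    · simp [hij]
  -- compat: F vs E
  have cFE : ∀ v u, f (V.ρ (uF r) v) u = f v (V.ρ (uE r) u) := by
    refine fun v u => sesq_ext b (sesq_comp_left hsesq (V.ρ (uF r)))
      (sesq_comp_right hsesq (V.ρ (uE r))) (fun i j => ?_) v u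
    rw [hF i, hE j]
    by_cases hi : (i : ℕ) + 1 < N
    · rw [dif_pos hi]
      by_cases hj : 0 < (j : ℕ)
      · rw [dif_pos hj, hsesq.smul_right, fb, fb]
        by_cases hij : (j : ℕ) = (i : ℕ) + 1
        · have hj' : j = ⟨(i : ℕ) + 1, hi⟩ := Fin.ext hij
          subst hj'
          rw [if_pos rfl, if_pos (by apply Fin.ext; simp)]
          have : D ⟨(i : ℕ) + 1, hi⟩ = lam ⟨(i : ℕ) + 1, hi⟩ * D i := by
            simpa [hD] using dpr_succ lam hi
          rw [this]
        · rw [if_neg (by intro h; apply hij; have := congrArg Fin.val h; simpa using this.symm),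
            if_neg (by intro h; apply hij; have := congrArg Fin.val h; simp at this; omega),
            mul_zero]
      · rw [dif_neg hj, sesq_zero_right hsesq, fb,
          if_neg (by intro h; have := congrArg Fin.val h; simp at this; omega)]
    · rw [dif_neg hi, sesq_zero_left hsesq]
      by_cases hj : 0 < (j : ℕ)
      · rw [dif_pos hj, hsesq.smul_right, fb,
          if_neg (by intro h; have := congrArg Fin.val h; have h2 := j.isLt; simp at this; omega),
          mul_zero]
      · rw [dif_neg hj, sesq_zero_right hsesq]
  -- compat: E vs F
  have cEF : ∀ v u, f (V.ρ (uE r) v) u = f v (V.ρ (uF r) u) := by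
    refine fun v u => sesq_ext b (sesq_comp_left hsesq (V.ρ (uE r)))
      (sesq_comp_right hsesq (V.ρ (uF r))) (fun i j => ?_) v u
    rw [hE i, hF j]
    by_cases hi : 0 < (i : ℕ)
    · rw [dif_pos hi, hsesq.smul_left, hlc, fb]
      by_cases hj : (j : ℕ) + 1 < N
      · rw [dif_pos hj, fb]
        by_cases hij : (i : ℕ) = (j : ℕ) + 1
        · have hi' : i = ⟨(j : ℕ) + 1, hj⟩ := Fin.ext hij
          subst hi'
          rw [if_pos (by apply Fin.ext; simp), if_pos rfl]
          have : D ⟨(j : ℕ) + 1, hj⟩ = lam ⟨(j : ℕ) + 1, hj⟩ * D j := by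
            simpa [hD] using dpr_succ lam hj
          rw [this]
          congr 2
        · rw [if_neg (by intro h; apply hij; have := congrArg Fin.val h; simp at this; omega),
            if_neg (by intro h; apply hij; have := congrArg Fin.val h; simpa using this),
            mul_zero]
      · rw [dif_neg hj, sesq_zero_right hsesq,
          if_neg (by intro h; have := congrArg Fin.val h; have h2 := i.isLt; simp at this; omega),
          mul_zero]
    · rw [dif_neg hi, sesq_zero_left hsesq]
      by_cases hj : (j : ℕ) + 1 < N
      · rw [dif_pos hj, fb,
          if_neg (by intro h; have := congrArg Fin.val h; simp at this; omega)]
      · rw [dif_neg hj, sesq_zero_right hsesq]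
  have hcomp : CompatF V f := by
    refine ⟨cFE, cEF, ?_, ?_, ?_⟩
    · exact diagc (uKinv r) (uK r) (fun i => (qc r (w i))⁻¹) (fun i => qc r (w i))
        hKinv hK (fun i => by
          rw [map_inv₀, conj_qc r (hwc i), qc_neg, inv_inv])
    · exact diagc (uK r) (uKinv r) (fun i => qc r (w i)) (fun i => (qc r (w i))⁻¹)
        hK hKinv (fun i => by rw [conj_qc r (hwc i), qc_neg])
    · exact diagc (uH r) (uH r) w w hH hH hwc
  have hnorm : f (b ⟨0, hN⟩) (b ⟨0, hN⟩) = 1 := by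
    rw [fb, if_pos rfl]
    simp [hD, dpr]
  refine ⟨f, ⟨⟨hsesq, hherm, hnd, hcomp⟩, hnorm⟩, ?_⟩
  rintro f' ⟨⟨hs', hh', hn', hc'⟩, hnorm'⟩
  funext v u
  refine sesq_ext b hs' hsesq (fun i j => ?_) v u
  rw [fb]
  -- diagonal values of f'
  have diag : ∀ k (hk : k < N), f' (b ⟨k, hk⟩) (b ⟨k, hk⟩) = dpr lam k := by
    intro k
    induction k with
    | zero => intro hk; exact hnorm'
    | succ k ih =>
        intro hk
        have hk' : k < N := by omega
        have h1 := hc'.1 (b ⟨k, hk'⟩) (b ⟨k + 1, hk⟩)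
        rw [hF ⟨k, hk'⟩, hE ⟨k + 1, hk⟩, dif_pos (show k + 1 < N from hk),
          dif_pos (Nat.succ_pos k), hs'.smul_right] at h1
        rw [dpr_succ lam hk, ← ih hk']
        exact h1
  by_cases hij : i = j
  · subst hij
    rw [if_pos rfl]
    have := diag (i : ℕ) i.isLt
    simpa [hD] using this
  · rw [if_neg hij]
    have h1 := hc'.2.2.2.2 (b i) (b j)
    rw [hH i, hH j, hs'.smul_left, hs'.smul_right, hwc i] at h1
    have h2 : (w i - w j) * f' (b i) (b j) = 0 := by linear_combination h1
    rcases mul_eq_zero.mp h2 with h | h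
    · exact absurd (hwinj (sub_eq_zero.mp h)) hij
    · exact h

/-- Every simple module in the set `A` (each `V_α` with
`α ∈ (ℝ∖ℤ) ∪ rℤ`, each `S_n` with `n ∈ {0,…,r−2}`, and each `ℂ^H_{ar}` with `a ∈ ℤ`)
admits a non-degenerate compatible Hermitian form, uniquely determined by the
normalization `(v₀, v₀) = 1` on a highest weight vector `v₀`. -/
theorem simple_modules_in_A_have_unique_hermitian_structure
    (r : ℕ) (hr : 2 ≤ r) :
    (∀ (α : ℂ), AdmissibleAlpha r α →
      ∀ (V : Rep r) (b : Module.Basis (Fin r) ℂ V.carrier), IsValphaBasis V α b →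
        ∃! f : V.carrier → V.carrier → ℂ,
          IsHermStr V f ∧ f (b ⟨0, by omega⟩) (b ⟨0, by omega⟩) = 1) ∧
    (∀ (n : ℕ), n ≤ r - 2 →
      ∀ (V : Rep r) (b : Module.Basis (Fin (n + 1)) ℂ V.carrier), IsSnBasis n V b →
        ∃! f : V.carrier → V.carrier → ℂ, IsHermStr V f ∧ f (b 0) (b 0) = 1) ∧
    (∀ (a : ℤ) (V : Rep r) (b : Module.Basis (Fin 1) ℂ V.carrier), IsCHBasis a V b →
        ∃! f : V.carrier → V.carrier → ℂ, IsHermStr V f ∧ f (b 0) (b 0) = 1) := by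
  have hr0 : 0 < r := by omega
  refine ⟨?_, ?_, ?_⟩
  · -- the modules V_α
    intro α hα V b hb
    have him : α.im = 0 := by
      rcases hα with ⟨h1, _⟩ | ⟨m, hm⟩
      · exact h1
      · rw [hm]; simp
    have hαc : (starRingEnd ℂ) α = α := Complex.conj_eq_iff_im.mpr him
    have hwc : ∀ i : Fin r, (starRingEnd ℂ) (α + (r : ℂ) - 1 - 2 * ((i : ℕ) : ℂ))
        = α + (r : ℂ) - 1 - 2 * ((i : ℕ) : ℂ) := by
      intro i
      rw [Complex.conj_eq_iff_im]
      simp [him]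
    have hwinj : Function.Injective
        (fun i : Fin r => α + (r : ℂ) - 1 - 2 * ((i : ℕ) : ℂ)) := by
      intro i j h
      simp only at h
      have h2 : ((i : ℕ) : ℂ) = ((j : ℕ) : ℂ) := by linear_combination (-(1 : ℂ)/2) * h
      exact Fin.ext (Nat.cast_injective h2)
    have hlc : ∀ i : Fin r, (starRingEnd ℂ)
        (brace r ((i : ℕ) : ℂ) * brace r (((i : ℕ) : ℂ) - α) / (brace r 1) ^ 2)
        = brace r ((i : ℕ) : ℂ) * brace r (((i : ℕ) : ℂ) - α) / (brace r 1) ^ 2 := by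
      intro i
      rw [map_div₀, map_mul, map_pow,
        conj_brace r (by simp), conj_brace r (by rw [map_sub, hαc]; simp),
        conj_brace r (map_one _)]
      ring
    have hlnz : ∀ i : Fin r, 0 < (i : ℕ) →
        brace r ((i : ℕ) : ℂ) * brace r (((i : ℕ) : ℂ) - α) / (brace r 1) ^ 2 ≠ 0 := by
      intro i hi
      have h1 : brace r ((i : ℕ) : ℂ) ≠ 0 := brace_nat_ne_zero r hr hi i.isLt
      have h3 : brace r 1 ≠ 0 := brace_one_ne_zero r hr
      have h2 : brace r (((i : ℕ) : ℂ) - α) ≠ 0 := by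
        intro hcon
        rw [brace_eq_zero_iff r (by omega)] at hcon
        obtain ⟨n, hn⟩ := hcon
        rcases hα with ⟨_, hnot⟩ | ⟨m, hm⟩
        · exact hnot ((i : ℕ) - n * r) (by push_cast; linear_combination -hn)
        · rw [hm] at hn
          have h4 : ((i : ℕ) : ℤ) = (n + m) * r := by
            have h5 : ((i : ℕ) : ℂ) = (((n + m) * r : ℤ) : ℂ) := by
              push_cast
              linear_combination hn
            exact_mod_cast h5
          have hd : (r : ℤ) ∣ ((i : ℕ) : ℤ) := ⟨n + m, by rw [h4]; ring⟩
          have h6 := Int.le_of_dvd (by exact_mod_cast hi) hd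
          have h7 := i.isLt
          omega
      exact div_ne_zero (mul_ne_zero h1 h2) (pow_ne_zero 2 h3)
    exact ladder r r hr0 V b _ _ hwc hwinj hlc hlnz
      (fun i => (hb i).1) (fun i => (hb i).2.1) (fun i => (hb i).2.2.1)
      (fun i => (hb i).2.2.2)
  · -- the modules S_n
    intro n hn V b hb
    have hwc : ∀ i : Fin (n + 1), (starRingEnd ℂ) ((n : ℂ) - 2 * ((i : ℕ) : ℂ))
        = (n : ℂ) - 2 * ((i : ℕ) : ℂ) := by
      intro i
      rw [Complex.conj_eq_iff_im]
      simp
    have hwinj : Function.Injective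
        (fun i : Fin (n + 1) => (n : ℂ) - 2 * ((i : ℕ) : ℂ)) := by
      intro i j h
      simp only at h
      have h2 : ((i : ℕ) : ℂ) = ((j : ℕ) : ℂ) := by linear_combination (-(1 : ℂ)/2) * h
      exact Fin.ext (Nat.cast_injective h2)
    have hlc : ∀ i : Fin (n + 1), (starRingEnd ℂ)
        (brace r ((i : ℕ) : ℂ) * brace r ((n : ℂ) + 1 - ((i : ℕ) : ℂ)) / (brace r 1) ^ 2)
        = brace r ((i : ℕ) : ℂ) * brace r ((n : ℂ) + 1 - ((i : ℕ) : ℂ)) / (brace r 1) ^ 2 := by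
      intro i
      rw [map_div₀, map_mul, map_pow,
        conj_brace r (by simp), conj_brace r (by rw [map_sub, map_add]; simp),
        conj_brace r (map_one _)]
      ring
    have hlnz : ∀ i : Fin (n + 1), 0 < (i : ℕ) →
        brace r ((i : ℕ) : ℂ) * brace r ((n : ℂ) + 1 - ((i : ℕ) : ℂ)) / (brace r 1) ^ 2 ≠ 0 := by
      intro i hi
      have hile : (i : ℕ) ≤ n := by have := i.isLt; omega
      have h1 : brace r ((i : ℕ) : ℂ) ≠ 0 := brace_nat_ne_zero r hr hi (by omega)
      have hcast : ((n + 1 - (i : ℕ) : ℕ) : ℂ) = (n : ℂ) + 1 - ((i : ℕ) : ℂ) := by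
        rw [Nat.cast_sub (by omega)]
        push_cast
        ring
      have h2 : brace r ((n : ℂ) + 1 - ((i : ℕ) : ℂ)) ≠ 0 := by
        rw [← hcast]
        exact brace_nat_ne_zero r hr (by omega) (by omega)
      exact div_ne_zero (mul_ne_zero h1 h2) (pow_ne_zero 2 (brace_one_ne_zero r hr))
    have h := ladder r (n + 1) (Nat.succ_pos n) V b _ _ hwc hwinj hlc hlnz
      (fun i => (hb i).1) (fun i => (hb i).2.1) (fun i => (hb i).2.2.1)
      (fun i => (hb i).2.2.2)
    have e0 : (⟨0, Nat.succ_pos n⟩ : Fin (n + 1)) = 0 := by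
      apply Fin.ext
      simp
    rw [e0] at h
    exact h
  · -- the modules ℂ^H_{ar}
    intro a V b hb
    have hH : ∀ i : Fin 1, V.ρ (uH r) (b i) = ((a : ℂ) * r) • b i := by
      intro i
      have hi : i = 0 := Subsingleton.elim i 0
      rw [hi]
      exact hb.1
    have hK : ∀ i : Fin 1, V.ρ (uK r) (b i) = qc r ((a : ℂ) * r) • b i := by
      intro i
      have hi : i = 0 := Subsingleton.elim i 0
      rw [hi]
      exact hb.2.1
    have hF : ∀ i : Fin 1, V.ρ (uF r) (b i) =
        if h : (i : ℕ) + 1 < 1 then b ⟨(i : ℕ) + 1, h⟩ else 0 := by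
      intro i
      have hi : i = 0 := Subsingleton.elim i 0
      rw [hi, dif_neg (by simp)]
      exact hb.2.2.2
    have hE : ∀ i : Fin 1, V.ρ (uE r) (b i) =
        if h : 0 < (i : ℕ) then (1 : ℂ) • b ⟨(i : ℕ) - 1, by have := i.isLt; omega⟩ else 0 := by
      intro i
      have hi : i = 0 := Subsingleton.elim i 0
      rw [hi, dif_neg (by simp)]
      exact hb.2.2.1
    have h := ladder r 1 Nat.one_pos V b (fun _ => (a : ℂ) * r) (fun _ => (1 : ℂ))
      (fun i => by rw [map_mul]; simp)
      (fun i j _ => Subsingleton.elim i j)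
      (fun i => map_one _)
      (fun i hi => by have := i.isLt; omega)
      hH hK hF hE
    have e0 : (⟨0, Nat.one_pos⟩ : Fin 1) = 0 := by
      apply Fin.ext
      simp
    rw [e0] at h
    exact h

end QSL2
end
end
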